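/- arXiv:2202.12630 — 9 statements merged into one kernel-verified Lean document; each statement's English description precedes it below -/
import Mathlib

section
/- Let R and S be integral domains with R ⊆ S. Suppose there exists a nonzero element a ∈ R such that the localizations R_a and S_a are equal (as subrings of the fraction field of S) and aS ∩ R = aR. Then R = S. -/
/-!
If `a (aᵏ s) ∈ R`, then `aS ∩ R = aR` writes it as `a r` with `r ∈ R`, and cancelling `a` gives
`aᵏ s ∈ R`. Starting from `aⁿ s ∈ R` and descending to `k = 0` yields `s ∈ R`.
-/

namespace Subring

variable {S : Type*} [CommRing S] (R : Subring S) {a : S}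

theorem mem_of_mul_mem (ha : IsLeftRegular a)
    (hint : ∀ r : S, r ∈ R → (∃ s : S, r = a * s) → ∃ r' ∈ R, r = a * r')
    {s : S} (hs : a * s ∈ R) : s ∈ R := by
  obtain ⟨r, hr, hsr⟩ := hint (a * s) hs ⟨s, rfl⟩
  exact ha hsr ▸ hr

theorem mem_of_pow_mul_mem (ha : IsLeftRegular a)
    (hint : ∀ r : S, r ∈ R → (∃ s : S, r = a * s) → ∃ r' ∈ R, r = a * r') :
    ∀ (n : ℕ) {s : S}, a ^ n * s ∈ R → s ∈ R
  | 0, s, hs => by simpa using hs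
  | n + 1, s, hs =>
    mem_of_pow_mul_mem ha hint n <| R.mem_of_mul_mem ha hint <| by rwa [← mul_assoc, ← pow_succ']

end Subring

theorem stmt_0_general {S : Type*} [CommRing S] [IsDomain S] (R : Subring S) (a : S)
    (ha : a ≠ 0)
    (hloc : ∀ s : S, ∃ n : ℕ, a ^ n * s ∈ R)
    (hint : ∀ r : S, r ∈ R → (∃ s : S, r = a * s) → ∃ r' ∈ R, r = a * r') :
    ∀ s : S, s ∈ R := fun s =>
  let ⟨n, hn⟩ := hloc s
  R.mem_of_pow_mul_mem (IsRegular.of_ne_zero ha).left hint n hn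

/-- If `R ⊆ S` are domains, `a ∈ R` nonzero, `R_a = S_a` (every element of `S`
becomes an element of `R` after multiplying by a power of `a`), and
`aS ∩ R = aR`, then `R = S`. -/
theorem stmt_0 {S : Type*} [CommRing S] [IsDomain S] (R : Subring S) (a : S)
    (haR : a ∈ R) (ha : a ≠ 0)
    (hloc : ∀ s : S, ∃ n : ℕ, a ^ n * s ∈ R)
    (hint : ∀ r : S, r ∈ R → (∃ s : S, r = a * s) → ∃ r' ∈ R, r = a * r') :
    ∀ s : S, s ∈ R :=
  stmt_0_general R a ha hloc hint
end

section
/- Let A be a commutative domain containing ℚ and D a locally nilpotent derivation on A. For nonzero a, b ∈ A, deg_D(ab) = deg_D(a) + deg_D(b), where deg_D(x) is the largest n with D^n(x) ≠ 0. -/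
/-! By the general Leibniz rule, `D^k (a * b)` is the sum of `C(k, i) • (D^i a * D^j b)` over
`i + j = k`. For `k ≥ m + n` every term with `(i, j) ≠ (m, n)` has `i > m` or `j > n` and vanishes,
so `D^(m+n+1) (a * b) = 0` and `D^(m+n) (a * b) = C(m+n, m) • (D^m a * D^n b)`, which is nonzero
because `A` is a domain of characteristic zero. -/

open Finset

namespace Derivation

theorem iterate_apply_mul {R A : Type*} [CommSemiring R] [CommSemiring A] [Algebra R A]
    (D : Derivation R A A) (n : ℕ) (a b : A) :
    D^[n] (a * b) = ∑ ij ∈ antidiagonal n, n.choose ij.1 • (D^[ij.1] a * D^[ij.2] b) := by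
  induction n with
  | zero => simp
  | succ n ih =>
    rw [sum_antidiagonal_choose_succ_nsmul (fun i j => D^[i] a * D^[j] b) n]
    simp only [Function.iterate_succ_apply', ih, map_sum, map_nsmul, leibniz, smul_eq_mul,
      smul_add, sum_add_distrib]
    congr 1
    refine sum_congr rfl fun ⟨i, j⟩ hij => ?_
    rw [mul_comm, n.choose_symm_of_eq_add (mem_antidiagonal.1 hij).symm]

end Derivation

theorem iterate_eq_zero_of_le {M F : Type*} [Zero M] [FunLike F M M] [ZeroHomClass F M M]
    (f : F) {x : M} {k l : ℕ} (hk : (⇑f)^[k] x = 0) (hkl : k ≤ l) : (⇑f)^[l] x = 0 := by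
  obtain ⟨j, rfl⟩ := Nat.exists_eq_add_of_le hkl
  rw [add_comm, Function.iterate_add_apply, hk, iterate_map_zero]

theorem iterate_mul_iterate_eq_zero {A F : Type*} [MulZeroClass A] [FunLike F A A]
    [ZeroHomClass F A A] (f : F) {a b : A} {m n i j : ℕ}
    (ha : (⇑f)^[m + 1] a = 0) (hb : (⇑f)^[n + 1] b = 0)
    (hij : m + n ≤ i + j) (hne : (i, j) ≠ (m, n)) : (⇑f)^[i] a * (⇑f)^[j] b = 0 := by
  rcases lt_or_ge m i with hi | hi
  · rw [iterate_eq_zero_of_le f ha hi, zero_mul]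
  · rw [iterate_eq_zero_of_le f hb (by grind), mul_zero]

theorem stmt_1_general {A : Type*} [CommRing A] [IsDomain A] [Algebra ℚ A]
    (D : Derivation ℚ A A)
    (a b : A) (m n : ℕ)
    (hma : (⇑D)^[m] a ≠ 0) (hma' : (⇑D)^[m + 1] a = 0)
    (hnb : (⇑D)^[n] b ≠ 0) (hnb' : (⇑D)^[n + 1] b = 0) :
    (⇑D)^[m + n] (a * b) ≠ 0 ∧ (⇑D)^[m + n + 1] (a * b) = 0 := by
  have : CharZero A := charZero_of_injective_algebraMap (algebraMap ℚ A).injective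
  constructor
  · rw [D.iterate_apply_mul, sum_eq_single_of_mem (m, n) (by simp) fun ⟨i, j⟩ hij hne => by
      rw [iterate_mul_iterate_eq_zero D hma' hnb' (mem_antidiagonal.1 hij).ge hne, smul_zero]]
    exact smul_ne_zero (Nat.choose_pos (by omega)).ne' (mul_ne_zero hma hnb)
  · rw [D.iterate_apply_mul]
    refine sum_eq_zero fun ⟨i, j⟩ hij => ?_
    have hij : i + j = m + n + 1 := mem_antidiagonal.1 hij
    rw [iterate_mul_iterate_eq_zero D hma' hnb' (by omega) (by grind), smul_zero]

/-- For a locally nilpotent derivation `D` on a domain containing `ℚ`,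
`deg_D (a*b) = deg_D a + deg_D b` for nonzero `a, b`. -/
theorem stmt_1 {A : Type*} [CommRing A] [IsDomain A] [Algebra ℚ A]
    (D : Derivation ℚ A A) (hln : ∀ x : A, ∃ n : ℕ, (⇑D)^[n] x = 0)
    (a b : A) (ha : a ≠ 0) (hb : b ≠ 0) (m n : ℕ)
    (hma : (⇑D)^[m] a ≠ 0) (hma' : (⇑D)^[m + 1] a = 0)
    (hnb : (⇑D)^[n] b ≠ 0) (hnb' : (⇑D)^[n + 1] b = 0) :
    (⇑D)^[m + n] (a * b) ≠ 0 ∧ (⇑D)^[m + n + 1] (a * b) = 0 :=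
  stmt_1_general D a b m n hma hma' hnb hnb'
end

section
/- Let A be a commutative domain containing ℚ and D a locally nilpotent derivation on A. The kernel of D is factorially closed in A: if a, b ∈ A are nonzero and ab ∈ ker D, then a ∈ ker D and b ∈ ker D. -/
/-!
Local nilpotency gives largest indices `p`, `q` with `D^p a ≠ 0` and `D^q b ≠ 0`. In the Leibniz
expansion of `D^(p+q) (a * b)` only the term `(p+q).choose p • (D^p a * D^q b)` survives, and it is
nonzero in a domain of characteristic zero. So `D (a * b) = 0` forces `p + q = 0`.
-/

open Finset

section Iterate

variable {M : Type*} [Zero M] {f : M → M}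

lemma iterate_eq_zero_of_le_s2 (hf : f 0 = 0) {x : M} {m n : ℕ} (hmn : m ≤ n)
    (h : f^[m] x = 0) : f^[n] x = 0 := by
  obtain ⟨k, rfl⟩ := Nat.exists_eq_add_of_le hmn
  rw [add_comm, Function.iterate_add_apply, h, Function.iterate_fixed hf]

lemma exists_iterate_ne_zero_and_iterate_succ_eq_zero {x : M} (hx : x ≠ 0) {n : ℕ}
    (h : f^[n] x = 0) : ∃ p, f^[p] x ≠ 0 ∧ f^[p + 1] x = 0 := by
  induction n with
  | zero => exact absurd h hx
  | succ n ih =>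
    by_cases hn : f^[n] x = 0
    · exact ih hn
    · exact ⟨n, hn, h⟩

end Iterate

namespace Derivation

variable {R A : Type*} [CommSemiring R] [CommSemiring A] [Algebra R A] (D : Derivation R A A)

theorem iterate_leibniz (n : ℕ) (x y : A) :
    D^[n] (x * y) = ∑ ij ∈ antidiagonal n, n.choose ij.1 • (D^[ij.1] x * D^[ij.2] y) := by
  induction n with
  | zero => simp
  | succ n ih =>
    rw [sum_antidiagonal_choose_succ_nsmul (fun i j => D^[i] x * D^[j] y),
      Function.iterate_succ_apply', ih, map_sum, add_comm, ← sum_add_distrib]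
    refine sum_congr rfl fun ij hij => ?_
    rw [Nat.choose_symm_of_eq_add (HasAntidiagonal.mem_antidiagonal.mp hij).symm, ← smul_add, map_nsmul,
      leibniz, smul_eq_mul, smul_eq_mul, Function.iterate_succ_apply',
      Function.iterate_succ_apply', mul_comm (D^[ij.2] y), add_comm]

theorem iterate_add_mul_eq {a b : A} {p q : ℕ} (ha : D^[p + 1] a = 0) (hb : D^[q + 1] b = 0) :
    D^[p + q] (a * b) = (p + q).choose p • (D^[p] a * D^[q] b) := by
  rw [iterate_leibniz, sum_eq_single_of_mem (p, q) (HasAntidiagonal.mem_antidiagonal.mpr rfl)]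
  rintro ⟨i, j⟩ hij hne
  rw [HasAntidiagonal.mem_antidiagonal] at hij
  rcases lt_or_ge p i with hi | hi
  · rw [iterate_eq_zero_of_le_s2 (map_zero D) hi ha, zero_mul, smul_zero]
  · have hj : q + 1 ≤ j := by
      by_contra
      exact hne (Prod.ext (by omega) (by omega))
    rw [iterate_eq_zero_of_le_s2 (map_zero D) hj hb, mul_zero, smul_zero]

theorem iterate_add_mul_ne_zero [IsDomain A] [CharZero A] {a b : A} {p q : ℕ}
    (ha : D^[p] a ≠ 0) (ha' : D^[p + 1] a = 0) (hb : D^[q] b ≠ 0) (hb' : D^[q + 1] b = 0) :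
    D^[p + q] (a * b) ≠ 0 := by
  rw [iterate_add_mul_eq D ha' hb', nsmul_eq_mul]
  exact mul_ne_zero (Nat.cast_ne_zero.mpr (Nat.choose_pos (Nat.le_add_right p q)).ne')
    (mul_ne_zero ha hb)

end Derivation

/-- The kernel of a locally nilpotent derivation on a domain containing `ℚ`
is factorially closed. -/
theorem stmt_2 {A : Type*} [CommRing A] [IsDomain A] [Algebra ℚ A]
    (D : Derivation ℚ A A) (hln : ∀ x : A, ∃ n : ℕ, (⇑D)^[n] x = 0)
    (a b : A) (ha : a ≠ 0) (hb : b ≠ 0) (hab : D (a * b) = 0) :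
    D a = 0 ∧ D b = 0 := by
  have : CharZero A := charZero_of_injective_algebraMap (algebraMap ℚ A).injective
  obtain ⟨p, hpa, hpa'⟩ := exists_iterate_ne_zero_and_iterate_succ_eq_zero ha (hln a).choose_spec
  obtain ⟨q, hqb, hqb'⟩ := exists_iterate_ne_zero_and_iterate_succ_eq_zero hb (hln b).choose_spec
  have hpq : p + q = 0 := by
    by_contra hpq
    exact D.iterate_add_mul_ne_zero hpa hpa' hqb hqb' <|
      iterate_eq_zero_of_le_s2 (map_zero D) (Nat.one_le_iff_ne_zero.mpr hpq) hab
  obtain ⟨rfl, rfl⟩ : p = 0 ∧ q = 0 := by omega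
  exact ⟨hpa', hqb'⟩
end

section
/- Let k be a field of characteristic zero, R = k[t], and B = R[x,y,z]. Set F = x(tz+x) − t²y², G = (tz+x)F² + 2tx²yF + x⁵, and P = tyF + x³. Define the R-derivation D on B by D(x) = −2t²FP, D(y) = t(6x²P − G), D(z) = 2x(5t²yP + tF²) + 2tFP. Then D(F) = 0 and D(G) = 0. -/
open MvPolynomial

section

variable {R A : Type*} [CommSemiring R] [CommRing A] [Algebra R A] (D : Derivation R A A)
  {t x y z F G P : A}

theorem Derivation.map_ofNat (n : ℕ) [n.AtLeastTwo] : D (OfNat.ofNat n : A) = 0 :=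
  D.map_natCast n

theorem Derivation.map_quadric_eq_zero (ht : D t = 0)
    (hF : F = x * (t * z + x) - t ^ 2 * y ^ 2)
    (hG : G = (t * z + x) * F ^ 2 + 2 * t * x ^ 2 * y * F + x ^ 5)
    (hP : P = t * y * F + x ^ 3)
    (hx : D x = -2 * t ^ 2 * F * P)
    (hy : D y = t * (6 * x ^ 2 * P - G))
    (hz : D z = 2 * x * (5 * t ^ 2 * y * P + t * F ^ 2) + 2 * t * F * P) :
    D F = 0 := by
  rw [hF]
  simp only [map_sub, map_add, Derivation.leibniz, Derivation.leibniz_pow, ht, hx, hy, hz,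
    smul_eq_mul]
  rw [hG, hP, hF]
  ring

theorem Derivation.map_quintic_eq_zero (ht : D t = 0) (hDF : D F = 0)
    (hF : F = x * (t * z + x) - t ^ 2 * y ^ 2)
    (hG : G = (t * z + x) * F ^ 2 + 2 * t * x ^ 2 * y * F + x ^ 5)
    (hP : P = t * y * F + x ^ 3)
    (hx : D x = -2 * t ^ 2 * F * P)
    (hy : D y = t * (6 * x ^ 2 * P - G))
    (hz : D z = 2 * x * (5 * t ^ 2 * y * P + t * F ^ 2) + 2 * t * F * P) :
    D G = 0 := by
  rw [hG]
  simp only [map_add, Derivation.leibniz, Derivation.leibniz_pow, D.map_ofNat, ht, hx, hy,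
    hz, hDF, smul_eq_mul]
  rw [hP, hG, hF]
  ring

end

theorem stmt_4_general {k : Type*} [Field k]
    (D : Derivation (Polynomial k) (MvPolynomial (Fin 3) (Polynomial k))
      (MvPolynomial (Fin 3) (Polynomial k)))
    (t F G P : MvPolynomial (Fin 3) (Polynomial k))
    (ht : t = C Polynomial.X)
    (hF : F = X 0 * (t * X 2 + X 0) - t ^ 2 * (X 1) ^ 2)
    (hG : G = (t * X 2 + X 0) * F ^ 2 + 2 * t * (X 0) ^ 2 * X 1 * F + (X 0) ^ 5)
    (hP : P = t * X 1 * F + (X 0) ^ 3)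
    (hx : D (X 0) = -2 * t ^ 2 * F * P)
    (hy : D (X 1) = t * (6 * (X 0) ^ 2 * P - G))
    (hz : D (X 2) = 2 * X 0 * (5 * t ^ 2 * X 1 * P + t * F ^ 2) + 2 * t * F * P) :
    D F = 0 ∧ D G = 0 := by
  have hDt : D t = 0 := by
    rw [ht, ← algebraMap_eq]
    exact D.map_algebraMap _
  have hDF := D.map_quadric_eq_zero hDt hF hG hP hx hy hz
  exact ⟨hDF, D.map_quintic_eq_zero hDt hDF hF hG hP hx hy hz⟩

/-- For `R = k[t]`, `B = R[x,y,z]` and the explicit homogeneous `R`-derivation `D`,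
`D F = 0` and `D G = 0`. Here `x = X 0`, `y = X 1`, `z = X 2`, `t = C Polynomial.X`. -/
theorem stmt_4 {k : Type*} [Field k] [CharZero k]
    (D : Derivation (Polynomial k) (MvPolynomial (Fin 3) (Polynomial k))
      (MvPolynomial (Fin 3) (Polynomial k)))
    (t F G P : MvPolynomial (Fin 3) (Polynomial k))
    (ht : t = C Polynomial.X)
    (hF : F = X 0 * (t * X 2 + X 0) - t ^ 2 * (X 1) ^ 2)
    (hG : G = (t * X 2 + X 0) * F ^ 2 + 2 * t * (X 0) ^ 2 * X 1 * F + (X 0) ^ 5)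
    (hP : P = t * X 1 * F + (X 0) ^ 3)
    (hx : D (X 0) = -2 * t ^ 2 * F * P)
    (hy : D (X 1) = t * (6 * (X 0) ^ 2 * P - G))
    (hz : D (X 2) = 2 * X 0 * (5 * t ^ 2 * X 1 * P + t * F ^ 2) + 2 * t * F * P) :
    D F = 0 ∧ D G = 0 :=
  stmt_4_general D t F G P ht hF hG hP hx hy hz
end

section
/- Let R = ℝ[W₁,W₂]/(W₁² + W₂² − 1) with w₁, w₂ the images of W₁, W₂, and let B = R[X,Y,Z]. Define the R-derivation D on B by D(X) = 0, D(Y) = (1+w₂)X^{d+1}, D(Z) = −2w₁YX^d for a fixed integer d ≥ 0. Then D is locally nilpotent, and both F₁ = w₁Y² + (1+w₂)XZ and F₂ = (1−w₂)Y² + w₁XZ lie in ker D. -/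
open MvPolynomial

/-- The coordinate ring of the real circle. -/
noncomputable abbrev CircleRing : Type :=
  MvPolynomial (Fin 2) ℝ ⧸
    Ideal.span {((X 0) ^ 2 + (X 1) ^ 2 - 1 : MvPolynomial (Fin 2) ℝ)}

section Aux

variable {R A : Type*} [CommRing R] [CommRing A] [Algebra R A]
  (D : Derivation R A A)

lemma iter_zero (n : ℕ) : (⇑D)^[n] 0 = 0 := by
  induction n with
  | zero => rfl
  | succ n ih => rw [Function.iterate_succ_apply, map_zero, ih]

lemma iter_add (n : ℕ) (x y : A) : (⇑D)^[n] (x + y) = (⇑D)^[n] x + (⇑D)^[n] y := by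
  induction n generalizing x y with
  | zero => rfl
  | succ n ih => rw [Function.iterate_succ_apply, map_add, ih,
      Function.iterate_succ_apply, Function.iterate_succ_apply]

lemma iter_stable {n : ℕ} {x : A} (h : (⇑D)^[n] x = 0) {m : ℕ} (hm : n ≤ m) :
    (⇑D)^[m] x = 0 := by
  obtain ⟨j, rfl⟩ := Nat.exists_eq_add_of_le hm
  rw [Nat.add_comm, Function.iterate_add_apply, h, iter_zero]

lemma iter_mul : ∀ k n m : ℕ, n + m = k → ∀ x y : A,
    (⇑D)^[n] x = 0 → (⇑D)^[m] y = 0 → (⇑D)^[k] (x * y) = 0 := by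
  intro k
  induction k with
  | zero =>
    intro n m hnm x y hx hy
    obtain ⟨rfl, rfl⟩ := Nat.add_eq_zero.mp hnm
    simp only [Function.iterate_zero_apply] at hx hy ⊢
    rw [hx, zero_mul]
  | succ k ih =>
    intro n m hnm x y hx hy
    rcases n with _ | n
    · simp only [Function.iterate_zero_apply] at hx
      rw [hx, zero_mul, iter_zero]
    rcases m with _ | m
    · simp only [Function.iterate_zero_apply] at hy
      rw [hy, mul_zero, iter_zero]
    rw [Function.iterate_succ_apply, Derivation.leibniz, smul_eq_mul, smul_eq_mul,
      iter_add]
    have h1 : (⇑D)^[k] (x * D y) = 0 := by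
      refine ih (n + 1) m (by omega) x (D y) hx ?_
      rw [← Function.iterate_succ_apply]; exact hy
    have h2 : (⇑D)^[k] (y * D x) = 0 := by
      refine ih (m + 1) n (by omega) y (D x) hy ?_
      rw [← Function.iterate_succ_apply]; exact hx
    rw [h1, h2, add_zero]

end Aux

set_option maxHeartbeats 1000000 in
set_option synthInstance.maxHeartbeats 200000 in
/-- Over `R = ℝ[W₁,W₂]/(W₁²+W₂²-1)`, the derivation with `DX = 0`,
`DY = (1+w₂)X^{d+1}`, `DZ = -2w₁YX^d` is locally nilpotent and kills
`F₁ = w₁Y² + (1+w₂)XZ` and `F₂ = (1-w₂)Y² + w₁XZ`. -/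
theorem stmt_8 (d : ℕ) (w₁ w₂ : CircleRing)
    (hw₁ : w₁ = Ideal.Quotient.mk _ (X 0)) (hw₂ : w₂ = Ideal.Quotient.mk _ (X 1))
    (D : Derivation CircleRing (MvPolynomial (Fin 3) CircleRing)
      (MvPolynomial (Fin 3) CircleRing))
    (hX : D (X 0) = 0)
    (hY : D (X 1) = C (1 + w₂) * (X 0) ^ (d + 1))
    (hZ : D (X 2) = -2 * C w₁ * X 1 * (X 0) ^ d) :
    (∀ b : MvPolynomial (Fin 3) CircleRing, ∃ n : ℕ, (⇑D)^[n] b = 0) ∧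
      D (C w₁ * (X 1) ^ 2 + C (1 + w₂) * X 0 * X 2) = 0 ∧
      D (C (1 - w₂) * (X 1) ^ 2 + C w₁ * X 0 * X 2) = 0 := by
  have hC : ∀ c : CircleRing, D (C c) = 0 := by
    intro c
    rw [← MvPolynomial.algebraMap_eq]
    exact Derivation.map_algebraMap D c
  have hD2 : D 2 = 0 := by
    have h2 : ((C : CircleRing →+* MvPolynomial (Fin 3) CircleRing) 2
        : MvPolynomial (Fin 3) CircleRing) = 2 := map_ofNat _ 2
    rw [← h2]; exact hC 2
  have hrel : w₁ ^ 2 + w₂ ^ 2 = 1 := by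
    subst hw₁ hw₂
    have : (Ideal.Quotient.mk _ ((X 0) ^ 2 + (X 1) ^ 2 : MvPolynomial (Fin 2) ℝ)
        : CircleRing) = Ideal.Quotient.mk _ (1 : MvPolynomial (Fin 2) ℝ) := by
      rw [Ideal.Quotient.eq]
      exact Ideal.subset_span (Set.mem_singleton _)
    simpa using this
  refine ⟨?_, ?_, ?_⟩
  · -- local nilpotence
    have hXi : ∀ i : Fin 3, ∃ n : ℕ, (⇑D)^[n] (X i : MvPolynomial (Fin 3) CircleRing) = 0 := by
      intro i
      fin_cases i
      · exact ⟨1, hX⟩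
      · refine ⟨2, ?_⟩
        show D (D (X 1)) = 0
        rw [hY]
        simp only [Derivation.leibniz, Derivation.leibniz_pow, hX, hC, mul_zero,
          zero_mul, smul_zero, zero_add, add_zero]
      · refine ⟨3, ?_⟩
        show D (D (D (X 2))) = 0
        rw [hZ]
        have h1 : D (-2 * C w₁ * X 1 * X 0 ^ d) =
            -2 * C w₁ * (C (1 + w₂) * X 0 ^ (d + 1)) * X 0 ^ d := by
          simp only [Derivation.leibniz, Derivation.leibniz_pow, hX, hY, hC, hD2, map_neg,
            mul_zero, zero_mul, smul_zero, neg_zero, zero_add, add_zero, smul_eq_mul]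
          ring
        rw [h1]
        simp only [Derivation.leibniz, Derivation.leibniz_pow, hX, hC, hD2, map_neg,
          mul_zero, zero_mul, smul_zero, neg_zero, zero_add, add_zero, smul_eq_mul]
        ring
    intro b
    induction b using MvPolynomial.induction_on with
    | C a => exact ⟨1, by simpa using hC a⟩
    | add p q hp hq =>
      obtain ⟨n, hn⟩ := hp
      obtain ⟨m, hm⟩ := hq
      refine ⟨max n m, ?_⟩
      rw [iter_add (R := CircleRing) (A := MvPolynomial (Fin 3) CircleRing) D, iter_stable (R := CircleRing) (A := MvPolynomial (Fin 3) CircleRing) D hn (le_max_left n m),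
        iter_stable (R := CircleRing) (A := MvPolynomial (Fin 3) CircleRing) D hm (le_max_right n m), add_zero]
    | mul_X p i hp =>
      obtain ⟨n, hn⟩ := hp
      obtain ⟨m, hm⟩ := hXi i
      exact ⟨n + m, iter_mul (R := CircleRing) (A := MvPolynomial (Fin 3) CircleRing) D (n + m) n m rfl _ _ hn hm⟩
  · simp only [Derivation.leibniz, Derivation.leibniz_pow, map_add, hX, hY, hZ, hC, hD2,
      map_one, map_sub, Derivation.map_one_eq_zero, smul_eq_mul]
    ring
  · simp only [Derivation.leibniz, Derivation.leibniz_pow, map_add, hX, hY, hZ, hC, hD2,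
      map_one, map_sub, Derivation.map_one_eq_zero, smul_eq_mul]
    have hrel' : (C w₁ : MvPolynomial (Fin 3) CircleRing) ^ 2
        + (C w₂ : MvPolynomial (Fin 3) CircleRing) ^ 2 = 1 := by
      rw [← map_pow, ← map_pow, ← map_add, hrel, map_one]
    linear_combination (-2 * X 1 * X 0 ^ (d + 1)) * hrel'
end

section
/- Let R = ℝ[W₁,W₂]/(W₁² + W₂² − 1) with w₁, w₂ the images of W₁, W₂. Then the ideal I = (w₁, 1 − w₂) of R is a projective R-module of rank one that is not principal (not free). -/
/-!
Since `w₁² = (1 - w₂)(1 + w₂)` and `2` is invertible, `I² = (1 - w₂)`; so `I` is an invertible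
ideal, hence projective, and of rank one as a nonzero ideal of a domain.

If `I = (f)`, then `w₁ = a f` and `1 - w₂ = b f` with `a, b` coprime, whence
`a (1 - w₂) = b w₁` and `a w₁ = b (1 + w₂)`. Evaluated at the point `(sin 2u, cos 2u)` of the
circle, these say that `A u sin u = B u cos u` for the continuous `π`-periodic functions
`A, B` obtained from `a, b`, which have no common zero: `(A, B)` would be a nowhere vanishing
section of the Möbius band. But `(A, B) = λ (cos, sin)` with `λ(u + π) = -λ(u)`, and such a `λ`
has a zero.
-/

open MvPolynomial

open Polynomial in
theorem Polynomial.irreducible_X_sq_add_C_X_sq_sub_one {K : Type*} [Field K] (h2 : (2 : K) ≠ 0) :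
    Irreducible (Polynomial.X ^ 2 + C (Polynomial.X ^ 2 - 1) : K[X][X]) := by
  set f : K[X][X] := Polynomial.X ^ 2 + C (Polynomial.X ^ 2 - 1) with hf
  have hmonic : f.Monic := monic_X_pow_add_C _ two_ne_zero
  have hdeg : f.natDegree = 2 := by rw [hf]; compute_degree!
  have hcoeff₀ : f.coeff 0 = (Polynomial.X - C 1) * (Polynomial.X + C 1) := by
    rw [hf, coeff_add, coeff_X_pow, if_neg (by norm_num), zero_add, coeff_C_zero, C_1]
    ring
  have hcoeff₁ : f.coeff 1 = 0 := by rw [hf, coeff_add, coeff_X_pow, coeff_C]; simp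
  have hprime : (Ideal.span {(Polynomial.X - C 1 : K[X])}).IsPrime :=
    (Ideal.span_singleton_prime (X_sub_C_ne_zero 1)).mpr (prime_X_sub_C 1)
  refine IsEisensteinAt.irreducible ⟨?_, fun {n} hn => ?_, ?_⟩ hprime hmonic.isPrimitive
    (by rw [hdeg]; norm_num)
  · rw [hmonic.leadingCoeff, Ideal.mem_span_singleton]
    exact fun h => not_isUnit_X_sub_C (1 : K) (isUnit_of_dvd_one h)
  · rw [hdeg] at hn
    interval_cases n
    · rw [hcoeff₀]
      exact Ideal.mul_mem_right _ _ (Ideal.mem_span_singleton_self _)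
    · rw [hcoeff₁]
      exact Ideal.zero_mem _
  · rw [Ideal.span_singleton_pow, Ideal.mem_span_singleton, hcoeff₀, pow_two,
      mul_dvd_mul_iff_left (X_sub_C_ne_zero 1), dvd_iff_isRoot]
    simpa [one_add_one_eq_two] using h2

theorem MvPolynomial.prime_X_zero_sq_add_X_one_sq_sub_one {K : Type*} [Field K]
    (h2 : (2 : K) ≠ 0) : Prime (X 0 ^ 2 + X 1 ^ 2 - 1 : MvPolynomial (Fin 2) K) := by
  let e : MvPolynomial (Fin 2) K ≃ₐ[K] Polynomial (Polynomial K) :=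
    (finSuccEquiv K 1).trans (Polynomial.mapAlgEquiv (uniqueAlgEquiv K (Fin 1)))
  have he : e (X 0 ^ 2 + X 1 ^ 2 - 1) =
      Polynomial.X ^ 2 + Polynomial.C (Polynomial.X ^ 2 - 1) := by
    rw [show (X 1 : MvPolynomial (Fin 2) K) = X (Fin.succ 0) from rfl]
    simp only [e, AlgEquiv.trans_apply, map_sub, map_add, map_pow, map_one, finSuccEquiv_X_zero,
      finSuccEquiv_X_succ, Polynomial.coe_mapAlgEquiv, Polynomial.map_X, Polynomial.map_C,
      RingHom.coe_coe, uniqueAlgEquiv_apply, eval₂_X]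
    ring
  rw [← UniqueFactorizationMonoid.irreducible_iff_prime, ← MulEquiv.irreducible_iff e, he]
  exact Polynomial.irreducible_X_sq_add_C_X_sq_sub_one h2

theorem Ideal.projective_of_mul_eq_span_singleton {R : Type*} [CommRing R]
    {I J : Ideal R} {v : R} (hv : v ∈ nonZeroDivisors R) (hIJ : I * J = Ideal.span {v}) :
    Module.Projective R I := by
  set K := FractionRing R
  have hunit : IsUnit (I : FractionalIdeal (nonZeroDivisors R) K) := by
    refine isUnit_of_mul_isUnit_left (y := (J : FractionalIdeal (nonZeroDivisors R) K)) ?_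
    rw [← FractionalIdeal.coeIdeal_mul, hIJ, FractionalIdeal.coeIdeal_span_singleton]
    obtain ⟨u, hu⟩ := IsLocalization.map_units K (⟨v, hv⟩ : nonZeroDivisors R)
    refine isUnit_iff_exists_inv.mpr ⟨FractionalIdeal.spanSingleton _ ↑u⁻¹, ?_⟩
    rw [FractionalIdeal.spanSingleton_mul_spanSingleton, ← hu, u.mul_inv,
      FractionalIdeal.spanSingleton_one]
  have hunit' : IsUnit (IsLocalization.coeSubmodule K I) := by
    simpa using hunit.map (FractionalIdeal.coeSubmoduleHom _ K)
  -- instance search does not find the instance given by `projective_of_isUnit` here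
  exact @Module.Projective.of_equiv _ _ _ _ _ _ _ _ _ _ _ _ _ _
    (Submodule.equivMapOfInjective _ (IsFractionRing.injective R K) I).symm
    (Submodule.projective_of_isUnit hunit')

theorem Ideal.rank_eq_one_of_ne_bot {R : Type*} [CommRing R] [IsDomain R] {I : Ideal R}
    (hI : I ≠ ⊥) : Module.rank R I = 1 := by
  refine le_antisymm ((Submodule.rank_le I).trans_eq (Module.rank_self R)) ?_
  obtain ⟨z, hzI, hz⟩ := Submodule.exists_mem_ne_zero_of_ne_bot hI
  exact Cardinal.one_le_iff_pos.mpr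
    (rank_pos_iff_exists_ne_zero.mpr ⟨⟨z, hzI⟩, by simpa using hz⟩)

theorem Ideal.exists_isCoprime_of_span_pair_eq_span_singleton {R : Type*} [CommRing R]
    [IsDomain R] {p q f : R} (h : Ideal.span {p, q} = Ideal.span {f}) :
    ∃ a b, IsCoprime a b ∧ p = a * f ∧ q = b * f := by
  rcases eq_or_ne f 0 with rfl | hf
  · have hpq := Ideal.span_eq_bot.mp (h.trans (Ideal.span_singleton_eq_bot.mpr rfl))
    exact ⟨1, 0, isCoprime_one_left, by simp [hpq p (by simp)], by simp [hpq q (by simp)]⟩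
  obtain ⟨a, rfl⟩ := Ideal.mem_span_singleton'.mp (h ▸ Ideal.subset_span (by simp) :
    p ∈ Ideal.span {f})
  obtain ⟨b, rfl⟩ := Ideal.mem_span_singleton'.mp (h ▸ Ideal.subset_span (by simp) :
    q ∈ Ideal.span {f})
  obtain ⟨c, d, hcd⟩ := Ideal.mem_span_pair.mp (h ▸ Ideal.mem_span_singleton_self f)
  refine ⟨a, b, ⟨c, d, mul_right_cancel₀ hf ?_⟩, rfl, rfl⟩
  linear_combination hcd

theorem Function.Antiperiodic.exists_eq_zero {f : ℝ → ℝ} {c : ℝ} (hf : Continuous f)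
    (h : Function.Antiperiodic f c) : ∃ x, f x = 0 := by
  have hzero : (0 : ℝ) ∈ Set.uIcc (f 0) (f c) := by
    rw [show f c = -f 0 by simpa using h 0, Set.mem_uIcc]
    rcases le_total (f 0) 0 with h0 | h0
    · exact Or.inl ⟨h0, by linarith⟩
    · exact Or.inr ⟨by linarith, h0⟩
  obtain ⟨x, -, hx⟩ := intermediate_value_uIcc hf.continuousOn hzero
  exact ⟨x, hx⟩

namespace Real

theorem exists_eq_zero_of_mul_sin_eq_mul_cos {A B : ℝ → ℝ} (hA : Continuous A)
    (hB : Continuous B) (hA_per : Function.Periodic A π) (hB_per : Function.Periodic B π)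
    (hAB : ∀ u, A u * sin u = B u * cos u) : ∃ u, A u = 0 ∧ B u = 0 := by
  set l : ℝ → ℝ := fun u => A u * cos u + B u * sin u
  have hl : Function.Antiperiodic l π := fun u => by
    simp only [l, hA_per u, hB_per u, cos_add_pi, sin_add_pi]
    ring
  obtain ⟨u, hu⟩ := hl.exists_eq_zero (by fun_prop)
  have hAu : A u = l u * cos u := by
    linear_combination sin u * hAB u - A u * sin_sq_add_cos_sq u
  have hBu : B u = l u * sin u := by
    linear_combination -cos u * hAB u - B u * sin_sq_add_cos_sq u
  exact ⟨u, by rw [hAu, hu, zero_mul], by rw [hBu, hu, zero_mul]⟩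

end Real

namespace CircleRing

open Real

noncomputable def x : CircleRing := Ideal.Quotient.mk _ (X 0)

noncomputable def y : CircleRing := Ideal.Quotient.mk _ (X 1)

instance : IsDomain CircleRing :=
  have h := MvPolynomial.prime_X_zero_sq_add_X_one_sq_sub_one (K := ℝ) two_ne_zero
  (Ideal.Quotient.isDomain_iff_prime _).mpr ((Ideal.span_singleton_prime h.ne_zero).mpr h)

theorem x_sq_add_y_sq : x ^ 2 + y ^ 2 = 1 := by
  rw [← sub_eq_zero]
  exact Ideal.Quotient.eq_zero_iff_mem.mpr (Ideal.mem_span_singleton_self _)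

noncomputable def evalAt (u : ℝ) : CircleRing →+* ℝ :=
  Ideal.Quotient.lift _ (MvPolynomial.eval ![sin (2 * u), cos (2 * u)]) fun p hp => by
    obtain ⟨q, rfl⟩ := Ideal.mem_span_singleton'.mp hp
    simp [sin_sq_add_cos_sq]

@[simp]
theorem evalAt_x (u : ℝ) : evalAt u x = sin (2 * u) := by simp [evalAt, x]

@[simp]
theorem evalAt_y (u : ℝ) : evalAt u y = cos (2 * u) := by simp [evalAt, y]

theorem periodic_evalAt (z : CircleRing) : Function.Periodic (fun u => evalAt u z) π :=
  fun u => by simp only [evalAt, mul_add, sin_add_two_pi, cos_add_two_pi]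

theorem continuous_evalAt (z : CircleRing) : Continuous fun u => evalAt u z := by
  obtain ⟨p, rfl⟩ := Ideal.Quotient.mk_surjective z
  exact (MvPolynomial.continuous_eval p).comp (by fun_prop)

theorem x_ne_zero : x ≠ 0 := fun h => by
  simpa [show 2 * (π / 4) = π / 2 by ring] using congrArg (evalAt (π / 4)) h

theorem one_sub_y_ne_zero : 1 - y ≠ 0 := fun h => by
  simpa [show 2 * (π / 4) = π / 2 by ring] using congrArg (evalAt (π / 4)) h

theorem span_ne_bot : Ideal.span {x, 1 - y} ≠ ⊥ :=
  (Submodule.ne_bot_iff _).mpr ⟨x, Ideal.subset_span (by simp), x_ne_zero⟩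

theorem span_mul_self : Ideal.span {x, 1 - y} * Ideal.span {x, 1 - y} = Ideal.span {1 - y} := by
  have hx : x * x = (1 - y) * (1 + y) := by linear_combination x_sq_add_y_sq
  rw [Ideal.span_pair_mul_span_pair]
  refine le_antisymm (Ideal.span_le.mpr ?_) ((Ideal.span_singleton_le_iff_mem _).mpr ?_)
  · simp only [Set.insert_subset_iff, Set.singleton_subset_iff, SetLike.mem_coe,
      Ideal.mem_span_singleton]
    exact ⟨hx ▸ dvd_mul_right _ _, dvd_mul_left _ _, dvd_mul_right _ _, dvd_mul_right _ _⟩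
  · set half : CircleRing := algebraMap ℝ CircleRing 2⁻¹
    have h2 : half * 2 = 1 := by
      rw [← map_ofNat (algebraMap ℝ CircleRing) 2, ← map_mul, inv_mul_cancel₀ two_ne_zero,
        map_one]
    have hmem : half * (x * x) + half * ((1 - y) * (1 - y)) ∈
        Ideal.span {x * x, x * (1 - y), (1 - y) * x, (1 - y) * (1 - y)} :=
      Ideal.add_mem _ (Ideal.mul_mem_left _ _ (Ideal.subset_span (by simp)))
        (Ideal.mul_mem_left _ _ (Ideal.subset_span (by simp)))
    rwa [← show 1 - y = half * (x * x) + half * ((1 - y) * (1 - y)) by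
      linear_combination (-half) * hx - (1 - y) * h2] at hmem

theorem exists_isCoprime_of_isPrincipal (h : (Ideal.span {x, 1 - y}).IsPrincipal) :
    ∃ a b : CircleRing, IsCoprime a b ∧ a * (1 - y) = b * x ∧ a * x = b * (1 + y) := by
  obtain ⟨f, hf⟩ := h
  rw [Ideal.submodule_span_eq] at hf
  obtain ⟨a, b, hab, hxa, hyb⟩ := Ideal.exists_isCoprime_of_span_pair_eq_span_singleton hf
  have h₁ : a * (1 - y) = b * x := by rw [hxa, hyb]; ring
  refine ⟨a, b, hab, h₁, mul_left_cancel₀ x_ne_zero ?_⟩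
  linear_combination a * x_sq_add_y_sq + (1 + y) * h₁

theorem evalAt_mul_sin_eq_evalAt_mul_cos {a b : CircleRing} (h₁ : a * (1 - y) = b * x)
    (h₂ : a * x = b * (1 + y)) (u : ℝ) : evalAt u a * sin u = evalAt u b * cos u := by
  have e₁ := congrArg (evalAt u) h₁
  have e₂ := congrArg (evalAt u) h₂
  simp only [map_mul, map_sub, map_add, map_one, evalAt_x, evalAt_y, sin_two_mul,
    cos_two_mul] at e₁ e₂
  linear_combination (sin u / 2) * e₁ + (cos u / 2) * e₂ + evalAt u b * cos u * sin_sq_add_cos_sq u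

theorem not_isPrincipal : ¬ (Ideal.span {x, 1 - y}).IsPrincipal := fun h => by
  obtain ⟨a, b, hab, h₁, h₂⟩ := exists_isCoprime_of_isPrincipal h
  obtain ⟨u, ha, hb⟩ := exists_eq_zero_of_mul_sin_eq_mul_cos (continuous_evalAt a)
    (continuous_evalAt b) (periodic_evalAt a) (periodic_evalAt b)
    (evalAt_mul_sin_eq_evalAt_mul_cos h₁ h₂)
  exact not_isCoprime_zero_zero (ha ▸ hb ▸ hab.map (evalAt u))

end CircleRing

/-- In `R = ℝ[W₁,W₂]/(W₁²+W₂²-1)`, the ideal `I = (w₁, 1-w₂)` is a rank-one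
projective `R`-module that is not principal (not free). -/
theorem stmt_9 (w₁ w₂ : CircleRing)
    (hw₁ : w₁ = Ideal.Quotient.mk _ (X 0)) (hw₂ : w₂ = Ideal.Quotient.mk _ (X 1))
    (I : Ideal CircleRing) (hI : I = Ideal.span {w₁, 1 - w₂}) :
    Module.Projective CircleRing I ∧ Module.rank CircleRing I = 1 ∧
      ¬ I.IsPrincipal := by
  obtain rfl : w₁ = CircleRing.x := hw₁
  obtain rfl : w₂ = CircleRing.y := hw₂
  subst hI
  exact ⟨Ideal.projective_of_mul_eq_span_singleton
      (mem_nonZeroDivisors_of_ne_zero CircleRing.one_sub_y_ne_zero) CircleRing.span_mul_self,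
    Ideal.rank_eq_one_of_ne_bot CircleRing.span_ne_bot, CircleRing.not_isPrincipal⟩
end

section
/- Let R = ℝ[W₁,W₂]/(W₁² + W₂² − 1), with w₁, w₂ the images of W₁, W₂, and B = R[X,Y,Z]. For d ≥ 0 define the R-derivation D by D(X) = (1−w₂)X₁^{d+1}, D(Y) = −w₁X₁^{d+1}, D(Z) = (d+2)w₁Y^{d+1}, where X₁ = w₁X + (1−w₂)Y. Then D is locally nilpotent and both X₁ and X₂ = (1+w₂)X + w₁Y lie in ker D. -/
open MvPolynomial

set_option maxHeartbeats 2000000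
set_option synthInstance.maxHeartbeats 1000000

/-- Over `R = ℝ[W₁,W₂]/(W₁²+W₂²-1)`, the derivation with
`DX = (1-w₂)X₁^{d+1}`, `DY = -w₁X₁^{d+1}`, `DZ = (d+2)w₁Y^{d+1}`,
where `X₁ = w₁X + (1-w₂)Y`, is locally nilpotent and kills `X₁` and
`X₂ = (1+w₂)X + w₁Y`. -/
theorem stmt_10 (d : ℕ) (w₁ w₂ : CircleRing)
    (hw₁ : w₁ = Ideal.Quotient.mk _ (X 0)) (hw₂ : w₂ = Ideal.Quotient.mk _ (X 1))
    (X₁ X₂ : MvPolynomial (Fin 3) CircleRing)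
    (hX₁ : X₁ = C w₁ * X 0 + C (1 - w₂) * X 1)
    (hX₂ : X₂ = C (1 + w₂) * X 0 + C w₁ * X 1)
    (D : Derivation CircleRing (MvPolynomial (Fin 3) CircleRing)
      (MvPolynomial (Fin 3) CircleRing))
    (hX : D (X 0) = C (1 - w₂) * X₁ ^ (d + 1))
    (hY : D (X 1) = -C w₁ * X₁ ^ (d + 1))
    (hZ : D (X 2) = C ((d + 2 : ℕ) : CircleRing) * C w₁ * (X 1) ^ (d + 1)) :
    (∀ b : MvPolynomial (Fin 3) CircleRing, ∃ n : ℕ, (⇑D)^[n] b = 0) ∧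
      D X₁ = 0 ∧ D X₂ = 0 := by
  -- the circle relation
  have hcirc : w₁ ^ 2 + w₂ ^ 2 = 1 := by
    have h0 : (Ideal.Quotient.mk (Ideal.span
        {((X 0) ^ 2 + (X 1) ^ 2 - 1 : MvPolynomial (Fin 2) ℝ)})
        ((X 0) ^ 2 + (X 1) ^ 2 - 1 : MvPolynomial (Fin 2) ℝ)) = 0 := by
      rw [Ideal.Quotient.eq_zero_iff_mem]
      exact Ideal.subset_span rfl
    rw [hw₁, hw₂]
    simpa [map_sub, map_add, map_pow, sub_eq_zero] using h0
  -- D kills constants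
  have hDC : ∀ c : CircleRing, D (C c : MvPolynomial (Fin 3) CircleRing) = 0 := by
    intro c
    have : (C c : MvPolynomial (Fin 3) CircleRing) =
        algebraMap CircleRing (MvPolynomial (Fin 3) CircleRing) c := rfl
    rw [this]
    exact D.map_algebraMap c
  have hC : ∀ (c : CircleRing) (p : MvPolynomial (Fin 3) CircleRing),
      D (C c * p) = C c * D p := by
    intro c p
    rw [D.leibniz, hDC, smul_zero, add_zero, smul_eq_mul]
  -- D X₁ = 0
  have hDX₁ : D X₁ = 0 := by
    rw [hX₁, map_add, hC, hC, hX, hY]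
    ring
  -- D X₂ = 0
  have hDX₂ : D X₂ = 0 := by
    rw [hX₂, map_add, hC, hC, hX, hY]
    have key : w₁ * w₁ = ((1 : CircleRing) + w₂) * (1 - w₂) := by
      linear_combination hcirc
    have key' : (C w₁ * C w₁ : MvPolynomial (Fin 3) CircleRing)
        = C (1 + w₂) * C (1 - w₂) := by
      rw [← map_mul, ← map_mul]; exact congrArg C key
    linear_combination (-(X₁ ^ (d + 1))) * key'
  -- iterates of D preserve 0
  have h0 : ∀ j : ℕ, (⇑D)^[j] (0 : MvPolynomial (Fin 3) CircleRing) = 0 := by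
    intro j
    induction j with
    | zero => rfl
    | succ n ih => rw [Function.iterate_succ_apply', ih, map_zero]
  have hiter : ∀ (k j : ℕ) (x : MvPolynomial (Fin 3) CircleRing),
      (⇑D)^[k] x = 0 → (⇑D)^[k + j] x = 0 := by
    intro k j x h
    have h2 := Function.iterate_add_apply (⇑D) j k x
    rw [h] at h2
    rw [show k + j = j + k from add_comm k j, h2, h0]
  have hadd : ∀ (k : ℕ) (x y : MvPolynomial (Fin 3) CircleRing),
      (⇑D)^[k] (x + y) = (⇑D)^[k] x + (⇑D)^[k] y := by
    intro k
    induction k with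
    | zero => intro x y; rfl
    | succ n ih =>
      intro x y
      simp only [Function.iterate_succ_apply', ih, map_add]
  -- product rule for local nilpotence
  have hmul : ∀ (N m n : ℕ) (a b : MvPolynomial (Fin 3) CircleRing), m + n ≤ N →
      (⇑D)^[m] a = 0 → (⇑D)^[n] b = 0 → (⇑D)^[m + n] (a * b) = 0 := by
    intro N
    induction N with
    | zero =>
      intro m n a b hle ha hb
      have hm : m = 0 := by omega
      have hn : n = 0 := by omega
      subst hm; subst hn
      simp only [Function.iterate_zero, id] at ha
      rw [ha, zero_mul]
      exact h0 _
    | succ N ih =>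
      intro m n a b hle ha hb
      match m, n with
      | 0, n =>
        simp only [Function.iterate_zero, id] at ha
        rw [zero_add, ha, zero_mul, h0]
      | m + 1, 0 =>
        simp only [Function.iterate_zero, id] at hb
        rw [hb, mul_zero, h0]
      | m + 1, n + 1 =>
        have h1 : (⇑D)^[m + 1 + (n + 1)] (a * b)
            = (⇑D)^[m + n + 1] (D (a * b)) := by
          rw [← Function.iterate_succ_apply]
          congr 1
          omega
        rw [h1, D.leibniz, smul_eq_mul, smul_eq_mul, hadd]
        have hDb : (⇑D)^[n] (D b) = 0 := by
          rw [← Function.iterate_succ_apply]; exact hb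
        have hDa : (⇑D)^[m] (D a) = 0 := by
          rw [← Function.iterate_succ_apply]; exact ha
        have t1 : (⇑D)^[m + 1 + n] (a * D b) = 0 :=
          ih (m + 1) n a (D b) (by omega) ha hDb
        have t2 : (⇑D)^[n + 1 + m] (b * D a) = 0 :=
          ih (n + 1) m b (D a) (by omega) hb hDa
        have t1' : (⇑D)^[m + n + 1] (a * D b) = 0 := by
          rw [show m + n + 1 = m + 1 + n from by omega]; exact t1
        have t2' : (⇑D)^[m + n + 1] (b * D a) = 0 := by
          rw [show m + n + 1 = n + 1 + m from by omega]; exact t2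
        rw [t1', t2', add_zero]
  -- local nilpotence facts for generators
  have hpow₁ : D (X₁ ^ (d + 1)) = 0 := by
    rw [Derivation.leibniz_pow, hDX₁, smul_zero, smul_zero]
  have hX0 : (⇑D)^[2] (X 0 : MvPolynomial (Fin 3) CircleRing) = 0 := by
    show D (D (X 0)) = 0
    rw [hX, hC, hpow₁, mul_zero]
  have hX1 : (⇑D)^[2] (X 1 : MvPolynomial (Fin 3) CircleRing) = 0 := by
    show D (D (X 1)) = 0
    rw [hY, show (-C w₁ * X₁ ^ (d + 1) : MvPolynomial (Fin 3) CircleRing)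
        = C (-w₁) * X₁ ^ (d + 1) by simp, hC, hpow₁, mul_zero]
  -- (X 1) ^ k is locally nilpotent
  have hX1pow : ∀ k : ℕ, ∃ n : ℕ, (⇑D)^[n] ((X 1 : MvPolynomial (Fin 3) CircleRing) ^ k) = 0 := by
    intro k
    induction k with
    | zero =>
      exact ⟨1, by simp only [pow_zero]; show D 1 = 0; exact D.map_one_eq_zero⟩
    | succ k ih =>
      obtain ⟨n, hn⟩ := ih
      refine ⟨n + 2, ?_⟩
      have := hmul (n + 2) n 2 (X 1 ^ k) (X 1) le_rfl hn hX1
      rw [← pow_succ] at this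
      exact this
  have hX2 : ∃ n : ℕ, (⇑D)^[n] (X 2 : MvPolynomial (Fin 3) CircleRing) = 0 := by
    obtain ⟨n, hn⟩ := hX1pow (d + 1)
    refine ⟨1 + n + 1, ?_⟩
    rw [Function.iterate_succ_apply, hZ, ← map_mul]
    have h1 : (⇑D)^[1] (C (((d + 2 : ℕ) : CircleRing) * w₁) :
        MvPolynomial (Fin 3) CircleRing) = 0 := by
      simp only [Function.iterate_one]; exact hDC (((d + 2 : ℕ) : CircleRing) * w₁)
    exact hmul (1 + n) 1 n _ _ le_rfl h1 hn
  refine ⟨?_, hDX₁, hDX₂⟩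
  intro b
  induction b using MvPolynomial.induction_on with
  | C a => exact ⟨1, hDC a⟩
  | add p q hp hq =>
    obtain ⟨m, hm⟩ := hp
    obtain ⟨n, hn⟩ := hq
    refine ⟨m + n, ?_⟩
    rw [hadd, hiter m n p hm]
    have := hiter n m q hn
    rw [add_comm n m] at this
    rw [this, add_zero]
  | mul_X p i hp =>
    obtain ⟨m, hm⟩ := hp
    have hXi : ∃ n : ℕ, (⇑D)^[n] (X i : MvPolynomial (Fin 3) CircleRing) = 0 := by
      fin_cases i
      · exact ⟨2, hX0⟩
      · exact ⟨2, hX1⟩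
      · exact hX2
    obtain ⟨n, hn⟩ := hXi
    exact ⟨m + n, hmul (m + n) m n _ _ le_rfl hm hn⟩
end

section
/- Let R = ℝ[W₁,W₂]/(W₁² + W₂² − 1) with w₁, w₂ the images of W₁, W₂. The linear polynomial X₁ = w₁X + (1−w₂)Y is not a variable of R[X,Y,Z]: there is no R-algebra automorphism of R[X,Y,Z] sending X to X₁. Equivalently, the row (w₁, 1−w₂, 0) is not completable to an invertible 3×3 matrix over R. -/
open MvPolynomial

/-- Evaluation at the point `(0, 1)` of the circle. -/
noncomputable def circleEval : CircleRing →+* ℝ :=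
  Ideal.Quotient.lift _ (MvPolynomial.eval ![(0 : ℝ), 1]) (by
    intro a ha
    rw [Ideal.mem_span_singleton] at ha
    obtain ⟨c, rfl⟩ := ha
    simp)

set_option synthInstance.maxHeartbeats 1000000 in
set_option maxHeartbeats 1000000 in
/-- Over `R = ℝ[W₁,W₂]/(W₁²+W₂²-1)`, the linear polynomial
`X₁ = w₁X + (1-w₂)Y` is not a variable of `R[X,Y,Z]`: no `R`-algebra
automorphism of `R[X,Y,Z]` sends `X` to `X₁`. -/
theorem stmt_11 (w₁ w₂ : CircleRing)
    (hw₁ : w₁ = Ideal.Quotient.mk _ (X 0)) (hw₂ : w₂ = Ideal.Quotient.mk _ (X 1)) :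
    ¬ ∃ σ : MvPolynomial (Fin 3) CircleRing ≃ₐ[CircleRing]
        MvPolynomial (Fin 3) CircleRing,
      σ (X 0) = C w₁ * X 0 + C (1 - w₂) * X 1 := by
  rintro ⟨σ, hσ⟩
  -- apply the inverse of σ, as an algebra hom
  set τ : MvPolynomial (Fin 3) CircleRing →ₐ[CircleRing]
      MvPolynomial (Fin 3) CircleRing := σ.symm.toAlgHom with hτ
  have hC : ∀ r : CircleRing,
      τ (C r) = (C r : MvPolynomial (Fin 3) CircleRing) := by
    intro r
    have := τ.commutes r
    simpa [MvPolynomial.algebraMap_eq] using this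
  have hX : (X 0 : MvPolynomial (Fin 3) CircleRing)
      = C w₁ * τ (X 0) + C (1 - w₂) * τ (X 1) := by
    have h0 : τ (σ (X 0)) = X 0 := σ.symm_apply_apply (X 0)
    calc (X 0 : MvPolynomial (Fin 3) CircleRing) = τ (σ (X 0)) := h0.symm
      _ = τ (C w₁ * X 0 + C (1 - w₂) * X 1) := by rw [hσ]
      _ = C w₁ * τ (X 0) + C (1 - w₂) * τ (X 1) := by
          rw [map_add τ, map_mul τ, map_mul τ, hC, hC]
  -- evaluate: coefficients to ℝ via circleEval, variables to 1
  have hf := congrArg (eval₂Hom circleEval (fun _ => (1 : ℝ))) hX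
  have hw₁0 : circleEval w₁ = 0 := by
    rw [hw₁]; simp [circleEval, Ideal.Quotient.lift_mk]
  have hw₂1 : circleEval (1 - w₂) = 0 := by
    rw [hw₂]; simp [circleEval, Ideal.Quotient.lift_mk]
  rw [map_add, map_mul, map_mul, eval₂Hom_C, eval₂Hom_C, hw₁0, hw₂1] at hf
  simp at hf
end

section
/- Let k be a field of characteristic zero and B = k[U,V,W] with the standard grading where U, V, W have degree 1. There is no locally nilpotent derivation D on B that is homogeneous of degree 3 whose kernel is k[F,G] with F, G both homogeneous polynomials of degree 3 (i.e., there is no homogeneous LND of type (3,3)). -/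
/-!
Iterating the derivation on `U` gives homogeneous polynomials of degrees `1, 4, 7, …`;
by local nilpotency the last nonzero one lies in `ker D = k[F,G]`. But every element of
`k[F,G]` only has homogeneous components in degrees divisible by `3`, so a nonzero
homogeneous element of degree `≡ 1 mod 3` cannot lie there.
-/

open MvPolynomial

namespace MvPolynomial

variable {σ R : Type*} [CommSemiring R]

theorem homogeneousComponent_mul_eq_zero_of_not_dvd {m : ℕ} {x y : MvPolynomial σ R}
    (hx : ∀ d, ¬ m ∣ d → homogeneousComponent d x = 0)
    (hy : ∀ d, ¬ m ∣ d → homogeneousComponent d y = 0)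
    {d : ℕ} (hd : ¬ m ∣ d) : homogeneousComponent d (x * y) = 0 := by
  rw [← x.sum_homogeneousComponent, ← y.sum_homogeneousComponent]
  simp only [Finset.sum_mul_sum, map_sum]
  refine Finset.sum_eq_zero fun i _ => Finset.sum_eq_zero fun j _ => ?_
  by_cases hi : m ∣ i
  · by_cases hj : m ∣ j
    · rw [homogeneousComponent_of_mem ((homogeneousComponent_isHomogeneous i x).mul
        (homogeneousComponent_isHomogeneous j y)), if_neg]
      rintro rfl
      exact hd (dvd_add hi hj)
    · rw [hy j hj, mul_zero, map_zero]
  · rw [hx i hi, zero_mul, map_zero]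

variable (σ R) in
def degreeMultiplesSubalgebra (m : ℕ) : Subalgebra R (MvPolynomial σ R) where
  carrier := {x | ∀ d, ¬ m ∣ d → homogeneousComponent d x = 0}
  mul_mem' hx hy _ hd := homogeneousComponent_mul_eq_zero_of_not_dvd hx hy hd
  add_mem' hx hy d hd := by rw [map_add, hx d hd, hy d hd, add_zero]
  algebraMap_mem' r d hd := by
    rw [algebraMap_eq, homogeneousComponent_of_mem (isHomogeneous_C σ r), if_neg]
    rintro rfl
    exact hd (dvd_zero m)

theorem IsHomogeneous.mem_degreeMultiplesSubalgebra {m i : ℕ} {p : MvPolynomial σ R}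
    (hp : p.IsHomogeneous (m * i)) : p ∈ degreeMultiplesSubalgebra σ R m := by
  intro d hd
  rw [homogeneousComponent_of_mem hp, if_neg]
  rintro rfl
  exact hd (dvd_mul_right m i)

theorem IsHomogeneous.eq_zero_of_mem_degreeMultiplesSubalgebra {m d : ℕ}
    {p : MvPolynomial σ R} (hp : p.IsHomogeneous d) (hd : ¬ m ∣ d)
    (hmem : p ∈ degreeMultiplesSubalgebra σ R m) : p = 0 := by
  simpa [homogeneousComponent_of_mem hp] using hmem d hd

theorem IsHomogeneous.iterate {f : MvPolynomial σ R → MvPolynomial σ R} {e : ℕ}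
    (hf : ∀ i p, IsHomogeneous p i → (f p).IsHomogeneous (i + e))
    {i : ℕ} {p : MvPolynomial σ R} (hp : p.IsHomogeneous i) (j : ℕ) :
    (f^[j] p).IsHomogeneous (i + e * j) := by
  induction j with
  | zero => simpa using hp
  | succ j ih =>
    rw [Function.iterate_succ_apply', mul_add_one, ← add_assoc]
    exact hf _ _ ih

end MvPolynomial

theorem Function.exists_iterate_ne_zero_apply_eq_zero {M : Type*} [Zero M] {f : M → M}
    {x : M} (hx : x ≠ 0) (h : ∃ n, f^[n] x = 0) :
    ∃ j, f^[j] x ≠ 0 ∧ f (f^[j] x) = 0 := by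
  classical
  have hpos : 0 < Nat.find h :=
    Nat.pos_of_ne_zero fun h0 => hx (by simpa [h0] using Nat.find_spec h)
  obtain ⟨j, hj⟩ : ∃ j, Nat.find h = j + 1 := Nat.exists_eq_add_one.mpr hpos
  refine ⟨j, Nat.find_min h (by omega), ?_⟩
  have := Nat.find_spec h
  rwa [hj, Function.iterate_succ_apply'] at this

theorem stmt_13_general {k : Type*} [Field k] :
    ¬ ∃ (D : Derivation k (MvPolynomial (Fin 3) k) (MvPolynomial (Fin 3) k))
        (F G : MvPolynomial (Fin 3) k),
      (∀ b, ∃ n : ℕ, (⇑D)^[n] b = 0) ∧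
      (∀ (i : ℕ) (f : MvPolynomial (Fin 3) k),
        f.IsHomogeneous i → (D f).IsHomogeneous (i + 3)) ∧
      F.IsHomogeneous 3 ∧ G.IsHomogeneous 3 ∧
      (∀ b : MvPolynomial (Fin 3) k, D b = 0 ↔ b ∈ Algebra.adjoin k {F, G}) := by
  rintro ⟨D, F, G, hnil, hhom, hF, hG, hker⟩
  obtain ⟨j, hc, hDc⟩ :=
    Function.exists_iterate_ne_zero_apply_eq_zero (X_ne_zero (R := k) (0 : Fin 3)) (hnil _)
  have hadjoin_le : Algebra.adjoin k {F, G} ≤ degreeMultiplesSubalgebra (Fin 3) k 3 := by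
    rw [Algebra.adjoin_le_iff, Set.pair_subset_iff]
    exact ⟨IsHomogeneous.mem_degreeMultiplesSubalgebra (i := 1) hF,
      IsHomogeneous.mem_degreeMultiplesSubalgebra (i := 1) hG⟩
  have hdeg : ((⇑D)^[j] (X 0)).IsHomogeneous (1 + 3 * j) :=
    (isHomogeneous_X k 0).iterate hhom j
  exact hc (hdeg.eq_zero_of_mem_degreeMultiplesSubalgebra (by omega)
    (hadjoin_le ((hker _).mp hDc)))

/-- There is no homogeneous locally nilpotent derivation of type `(3,3)` on
`k[U,V,W]`: no LND that is homogeneous of degree `3` for the standard grading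
can have kernel `k[F,G]` with `F, G` homogeneous of degree `3`. -/
theorem stmt_13 {k : Type*} [Field k] [CharZero k] :
    ¬ ∃ (D : Derivation k (MvPolynomial (Fin 3) k) (MvPolynomial (Fin 3) k))
        (F G : MvPolynomial (Fin 3) k),
      (∀ b, ∃ n : ℕ, (⇑D)^[n] b = 0) ∧
      (∀ (i : ℕ) (f : MvPolynomial (Fin 3) k),
        f.IsHomogeneous i → (D f).IsHomogeneous (i + 3)) ∧
      F.IsHomogeneous 3 ∧ G.IsHomogeneous 3 ∧
      (∀ b : MvPolynomial (Fin 3) k, D b = 0 ↔ b ∈ Algebra.adjoin k {F, G}) :=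
  stmt_13_general
end
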